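/- arXiv:2501.12199 — 4 statements merged into one kernel-verified Lean document; each statement's English description precedes it below -/
import Mathlib

section
/- A point x in the simplex is a rest point of the BNN dynamics if and only if x is a Nash equilibrium of the symmetric game with payoff matrix P, i.e., ẋ = 0 under BNN dynamics iff (Px)_i ≤ x^T P x for all i. -/
open Matrix

/-- `x` is a rest point of the BNN dynamics iff it is a symmetric Nash equilibrium. -/
theorem stmt4 {n : ℕ} (P : Matrix (Fin n) (Fin n) ℝ)
    (x : Fin n → ℝ) (hx : x ∈ stdSimplex ℝ (Fin n)) :
    (∀ i, max (P.mulVec x i - x ⬝ᵥ P.mulVec x) 0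
        - x i * ∑ j, max (P.mulVec x j - x ⬝ᵥ P.mulVec x) 0 = 0)
      ↔ ∀ i, P.mulVec x i ≤ x ⬝ᵥ P.mulVec x := by
  obtain ⟨hx0, hx1⟩ := hx
  set v := x ⬝ᵥ P.mulVec x with hv
  set S := ∑ j, max (P.mulVec x j - v) 0 with hS
  constructor
  · intro h
    have ha : ∀ i, max (P.mulVec x i - v) 0 = x i * S := by
      intro i; linarith [h i]
    have hsum0 : ∑ i, x i * (P.mulVec x i - v) = 0 := by
      have h1 : ∑ i, x i * P.mulVec x i = v := rfl
      have h2 : ∑ i, x i * v = v := by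
        rw [← Finset.sum_mul, hx1, one_mul]
      simp only [mul_sub]
      rw [Finset.sum_sub_distrib, h1, h2, sub_self]
    have hSnn : 0 ≤ S := Finset.sum_nonneg fun j _ => le_max_right _ _
    have hSzero : S = 0 := by
      by_contra hne
      have hpos : 0 < S := lt_of_le_of_ne hSnn (Ne.symm hne)
      have key : ∀ i, x i * (P.mulVec x i - v) = x i ^ 2 * S := by
        intro i
        rcases eq_or_lt_of_le (hx0 i) with h0 | h0
        · rw [← h0]; ring
        · have hmax := ha i
          have hp : 0 < x i * S := mul_pos h0 hpos
          have ht : P.mulVec x i - v = x i * S := by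
            rcases max_cases (P.mulVec x i - v) 0 with ⟨he, _⟩ | ⟨he, _⟩
            · rw [← he, hmax]
            · exfalso; rw [he] at hmax; linarith
          rw [ht]; ring
      have hx2 : 0 < ∑ i, x i ^ 2 := by
        have hne : ∃ i, x i ≠ 0 := by
          by_contra hall
          push_neg at hall
          simp [hall] at hx1
        obtain ⟨i, hi⟩ := hne
        have : (0:ℝ) < x i ^ 2 := by positivity
        exact lt_of_lt_of_le this (Finset.single_le_sum (f := fun j => x j ^ 2)
          (fun j _ => by positivity) (Finset.mem_univ i))
      have : ∑ i, x i * (P.mulVec x i - v) = (∑ i, x i ^ 2) * S := by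
        rw [Finset.sum_mul]; exact Finset.sum_congr rfl fun i _ => key i
      rw [this] at hsum0
      nlinarith
    intro i
    have := ha i
    rw [hSzero, mul_zero] at this
    have := le_max_left (P.mulVec x i - v) 0
    rw [‹max (P.mulVec x i - v) 0 = 0›] at this
    linarith
  · intro h i
    have hz : ∀ j, max (P.mulVec x j - v) 0 = 0 := fun j =>
      max_eq_right (by linarith [h j])
    rw [hz i]
    simp [hS, hz]
end

section
/- A point x in the simplex is a rest point of the Smith dynamics if and only if x is a Nash equilibrium: Σ_j x_j ((Px)_i - (Px)_j)₊ = x_i Σ_j ((Px)_j - (Px)_i)₊ for all i if and only if for all i with x_i > 0, (Px)_i ≥ (Px)_j for all j. -/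
open Matrix

/-- `x` is a rest point of the Smith dynamics iff every strategy in its support
achieves the maximal payoff (Nash equilibrium). -/
theorem stmt6 {n : ℕ} (P : Matrix (Fin n) (Fin n) ℝ)
    (x : Fin n → ℝ) (hx : x ∈ stdSimplex ℝ (Fin n)) :
    (∀ i, (∑ j, x j * max (P.mulVec x i - P.mulVec x j) 0)
        = x i * ∑ j, max (P.mulVec x j - P.mulVec x i) 0)
      ↔ ∀ i, 0 < x i → ∀ j, P.mulVec x j ≤ P.mulVec x i := by
  obtain ⟨hx0, hx1⟩ := hx
  constructor
  · intro h i hi j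
    -- pick a maximizer m of the payoff
    have hne : (Finset.univ : Finset (Fin n)).Nonempty := ⟨i, Finset.mem_univ i⟩
    obtain ⟨m, -, hm⟩ := Finset.exists_max_image Finset.univ (fun k => P.mulVec x k) hne
    have hm' : ∀ k, P.mulVec x k ≤ P.mulVec x m := fun k => hm k (Finset.mem_univ k)
    have hrhs : (∑ j, max (P.mulVec x j - P.mulVec x m) 0) = 0 := by
      apply Finset.sum_eq_zero
      intro k _
      exact max_eq_right (sub_nonpos.mpr (hm' k))
    have hsum : (∑ j, x j * max (P.mulVec x m - P.mulVec x j) 0) = 0 := by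
      rw [h m, hrhs, mul_zero]
    have hterm : ∀ k ∈ Finset.univ, x k * max (P.mulVec x m - P.mulVec x k) 0 = 0 := by
      apply (Finset.sum_eq_zero_iff_of_nonneg ?_).mp hsum
      intro k _
      exact mul_nonneg (hx0 k) (le_max_right _ _)
    have hi' := hterm i (Finset.mem_univ i)
    have : max (P.mulVec x m - P.mulVec x i) 0 = 0 := by
      rcases mul_eq_zero.mp hi' with h' | h'
      · exact absurd h' (ne_of_gt hi)
      · exact h'
    have hmi : P.mulVec x m ≤ P.mulVec x i := by
      by_contra hlt
      push_neg at hlt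
      have := le_of_eq this
      have h2 : P.mulVec x m - P.mulVec x i ≤ 0 := le_trans (le_max_left _ _) this
      linarith
    exact le_trans (hm' j) hmi
  · intro h i
    have hlhs : (∑ j, x j * max (P.mulVec x i - P.mulVec x j) 0) = 0 := by
      apply Finset.sum_eq_zero
      intro j _
      rcases eq_or_lt_of_le (hx0 j) with hj | hj
      · rw [← hj, zero_mul]
      · have h1 : P.mulVec x i ≤ P.mulVec x j := h j hj i
        rw [max_eq_right (sub_nonpos.mpr h1), mul_zero]
    rw [hlhs]
    rcases eq_or_lt_of_le (hx0 i) with hi | hi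
    · rw [← hi, zero_mul]
    · have : (∑ j, max (P.mulVec x j - P.mulVec x i) 0) = 0 := by
        apply Finset.sum_eq_zero
        intro j _
        exact max_eq_right (sub_nonpos.mpr (h i hi j))
      rw [this, mul_zero]
end

section
/- The BNN update preserves the simplex for sufficiently small learning rate: if π ∈ Δᴹ, all r̄_j, r̄ ∈ [R_min, R_max], and 0 < α ≤ 1/(M(R_max - R_min)) (with R_max > R_min), then π' defined by π'_i = π_i + α([r̄_i - r̄]₊ - π_i Σ_j [r̄_j - r̄]₊) lies in Δᴹ. -/
/-!
Writing `S = ∑ⱼ gⱼ` for the total positive excess, the update is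
`π'ᵢ = πᵢ (1 - α S) + α gᵢ`, so it is nonnegative as soon as `α S ≤ 1`, and it keeps the total
mass because `∑ᵢ (gᵢ - πᵢ S) = S - S = 0`. Each excess `[r̄ⱼ - r̄]₊` is at most `R_max - R_min`,
so `S ≤ M (R_max - R_min)` and the step size bound gives `α S ≤ 1`.
-/

open Finset

/-- `g i` plays the role of the excess reward `[r̄ᵢ - r̄]₊`. -/
def bnnStep {ι : Type*} [Fintype ι] (α : ℝ) (g π : ι → ℝ) : ι → ℝ :=
  fun i => π i + α * (g i - π i * ∑ j, g j)

theorem bnnStep_mem_stdSimplex {ι : Type*} [Fintype ι] {α : ℝ} {g π : ι → ℝ}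
    (hπ : π ∈ stdSimplex ℝ ι) (hg : ∀ i, 0 ≤ g i) (hα : 0 ≤ α) (hαg : α * ∑ j, g j ≤ 1) :
    bnnStep α g π ∈ stdSimplex ℝ ι := by
  obtain ⟨hπ_nonneg, hπ_sum⟩ := hπ
  refine ⟨fun i => ?_, ?_⟩
  · have hstep : bnnStep α g π i = π i * (1 - α * ∑ j, g j) + α * g i := by
      simp only [bnnStep]; ring
    rw [hstep]
    have := hπ_nonneg i
    have := hg i
    have : 0 ≤ 1 - α * ∑ j, g j := sub_nonneg.mpr hαg
    positivity
  · simp only [bnnStep, sum_add_distrib, ← mul_sum, sum_sub_distrib, ← sum_mul, hπ_sum]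
    ring

theorem sum_max_sub_zero_le {ι : Type*} [Fintype ι] {f : ι → ℝ} {r a b : ℝ}
    (hf : ∀ j, f j ∈ Set.Icc a b) (hr : a ≤ r) :
    ∑ j, max (f j - r) 0 ≤ Fintype.card ι * (b - a) := by
  calc ∑ j, max (f j - r) 0 ≤ ∑ _j : ι, (b - a) :=
        sum_le_sum fun j _ => max_le (by linarith [(hf j).2]) (by linarith [(hf j).1, (hf j).2])
    _ = Fintype.card ι * (b - a) := by rw [sum_const, card_univ, nsmul_eq_mul]

theorem mul_le_one_of_le_one_div {α s d : ℝ} (hα : 0 ≤ α) (hαd : α ≤ 1 / d) (hs : s ≤ d) :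
    α * s ≤ 1 := by
  rcases le_or_gt d 0 with hd | hd
  · have : α = 0 := le_antisymm (hαd.trans (one_div_nonpos.mpr hd)) hα
    simp [this]
  · calc α * s ≤ α * d := mul_le_mul_of_nonneg_left hs hα
      _ ≤ 1 / d * d := mul_le_mul_of_nonneg_right hαd hd.le
      _ = 1 := one_div_mul_cancel hd.ne'

theorem stmt12_general {M : ℕ} (π : Fin M → ℝ) (hπ : π ∈ stdSimplex ℝ (Fin M))
    (rbar : Fin M → ℝ) (r Rmin Rmax : ℝ)
    (hrb : ∀ j, rbar j ∈ Set.Icc Rmin Rmax) (hr : r ∈ Set.Icc Rmin Rmax)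
    (α : ℝ) (hα0 : 0 < α) (hα1 : α ≤ 1 / (M * (Rmax - Rmin))) :
    (fun i => π i + α * (max (rbar i - r) 0 - π i * ∑ j, max (rbar j - r) 0))
      ∈ stdSimplex ℝ (Fin M) := by
  have hsum : ∑ j, max (rbar j - r) 0 ≤ M * (Rmax - Rmin) := by
    simpa using sum_max_sub_zero_le hrb hr.1
  exact bnnStep_mem_stdSimplex hπ (fun _ => le_max_right _ _) hα0.le
    (mul_le_one_of_le_one_div hα0.le hα1 hsum)

/-- The ERID-BNN update preserves the simplex for sufficiently small learning rate. -/
theorem stmt12 {M : ℕ} (π : Fin M → ℝ) (hπ : π ∈ stdSimplex ℝ (Fin M))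
    (rbar : Fin M → ℝ) (r Rmin Rmax : ℝ) (hR : Rmin < Rmax)
    (hrb : ∀ j, rbar j ∈ Set.Icc Rmin Rmax) (hr : r ∈ Set.Icc Rmin Rmax)
    (α : ℝ) (hα0 : 0 < α) (hα1 : α ≤ 1 / (M * (Rmax - Rmin))) :
    (fun i => π i + α * (max (rbar i - r) 0 - π i * ∑ j, max (rbar j - r) 0))
      ∈ stdSimplex ℝ (Fin M) :=
  stmt12_general π hπ rbar r Rmin Rmax hrb hr α hα0 hα1
end

section
/- Under the Smith-replicator-based pairwise dynamics, the box constraints are forward invariant in the following local sense: if x_i = x̲_i then ẋ_i ≥ 0, and if x_i = x̄_i then ẋ_i ≤ 0, provided x̲_j ≤ x_j ≤ x̄_j for all j. -/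
open Matrix

/-- Under the Smith-replicator-based pairwise dynamics, the box constraints are
forward invariant in the local sense. -/
theorem stmt15 {n : ℕ} (P : Matrix (Fin n) (Fin n) ℝ)
    (x xlo xhi : Fin n → ℝ) (hb : ∀ j, xlo j ≤ x j ∧ x j ≤ xhi j) (i : Fin n) :
    (x i = xlo i →
      0 ≤ (∑ j, (x j - xlo j) * (xhi i - x i) * max (P.mulVec x i - P.mulVec x j) 0)
        - ∑ j, (x i - xlo i) * (xhi j - x j) * max (P.mulVec x j - P.mulVec x i) 0) ∧
    (x i = xhi i →
      (∑ j, (x j - xlo j) * (xhi i - x i) * max (P.mulVec x i - P.mulVec x j) 0)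
        - (∑ j, (x i - xlo i) * (xhi j - x j) * max (P.mulVec x j - P.mulVec x i) 0)
        ≤ 0) := by
  constructor
  · intro h
    have h2 : ∑ j, (x i - xlo i) * (xhi j - x j) * max (P.mulVec x j - P.mulVec x i) 0 = 0 := by
      apply Finset.sum_eq_zero; intro j _; rw [h]; ring
    rw [h2, sub_zero]
    apply Finset.sum_nonneg; intro j _
    exact mul_nonneg (mul_nonneg (sub_nonneg.2 (hb j).1) (sub_nonneg.2 (hb i).2))
      (le_max_right _ _)
  · intro h
    have h1 : ∑ j, (x j - xlo j) * (xhi i - x i) * max (P.mulVec x i - P.mulVec x j) 0 = 0 := by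
      apply Finset.sum_eq_zero; intro j _; rw [h]; ring
    rw [h1, zero_sub, neg_nonpos]
    apply Finset.sum_nonneg; intro j _
    exact mul_nonneg (mul_nonneg (sub_nonneg.2 (hb i).1) (sub_nonneg.2 (hb j).2))
      (le_max_right _ _)
end
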